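/- arXiv:1112.1450 — 2 statements merged into one kernel-verified Lean document; each statement's English description precedes it below -/
import Mathlib

section
/- There exists an absolute constant C > 0 such that for every 0 < p ≤ 1, every d with M = 2^d ≥ 4, and every sample size n with n ≥ M^{2/p}, the minimax risk over F^{+,1}_d(p) for estimation from n i.i.d. samples satisfies inf_{f̂_n} sup_{f ∈ F^{+,1}_d(p)} E_f ‖f̂_n − f‖²_{L²(μ_d)} ≥ C/n, where the infimum is over all estimators f̂_n, i.e., all measurable maps from ({0,1}^d)^n to L²(μ_d) applied to the sample X_1,…,X_n. -/
open scoped BigOperators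

namespace RWT

/-- The binary hypercube `{0,1}^d`, modeled as functions `Fin d → Bool`. -/
abbrev Cube (d : ℕ) := Fin d → Bool

/-- The dot product `s · x = ∑_j s_j x_j` of two binary strings (as a natural number). -/
def dotc {k : ℕ} (s x : Cube k) : ℕ :=
  (Finset.univ.filter fun j => s j = true ∧ x j = true).card

/-- The Walsh function `χ_s(x) = 2^{-k/2} (-1)^{s·x}` on `{0,1}^k`. -/
noncomputable def walsh {k : ℕ} (s x : Cube k) : ℝ :=
  (-1 : ℝ) ^ dotc s x / Real.sqrt (2 ^ k)

/-- The inner product `⟨f,g⟩ = ∑_x f(x) g(x)` of `L²(μ_k)` (counting measure). -/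
noncomputable def ip {k : ℕ} (f g : Cube k → ℝ) : ℝ := ∑ x : Cube k, f x * g x

/-- The Fourier–Walsh coefficient `θ_s = ⟨f, χ_s⟩`. -/
noncomputable def theta {d : ℕ} (f : Cube d → ℝ) (s : Cube d) : ℝ := ip f (walsh s)

/-- The prefix map `π_k : {0,1}^d → {0,1}^k`. -/
def pref {d : ℕ} (k : ℕ) (h : k ≤ d) (x : Cube d) : Cube k :=
  fun j => x (Fin.castLE h j)

/-- The suffix map `σ_k : {0,1}^d → {0,1}^{d-k}`. -/
def suff {d : ℕ} (k : ℕ) (h : k ≤ d) (x : Cube d) : Cube (d - k) :=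
  fun j => x ⟨k + j.val, by have := j.isLt; omega⟩

/-- Concatenation of `u ∈ {0,1}^k` and `v ∈ {0,1}^{d-k}` into a string in `{0,1}^d`. -/
def concat {d k : ℕ} (h : k ≤ d) (u : Cube k) (v : Cube (d - k)) : Cube d :=
  fun i => if hi : i.val < k then u ⟨i.val, hi⟩ else v ⟨i.val - k, by have := i.isLt; omega⟩

/-- `f` is a probability density on `{0,1}^d` w.r.t. the counting measure. -/
def IsDensity {d : ℕ} (f : Cube d → ℝ) : Prop :=
  (∀ x, 0 ≤ f x) ∧ ∑ x : Cube d, f x = 1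

/-- Membership of the coefficient vector `θ` in the weak-`ℓ^p` ball of radius `R`:
the decreasing rearrangement of `|θ|` satisfies `|θ_{(m)}| ≤ R m^{-1/p}` for `1 ≤ m ≤ 2^d`. -/
def wlp (d : ℕ) (p R : ℝ) (θ : Cube d → ℝ) : Prop :=
  ∃ e : Fin (2 ^ d) ≃ Cube d,
    (∀ i j : Fin (2 ^ d), i ≤ j → |θ (e j)| ≤ |θ (e i)|) ∧
    ∀ m : Fin (2 ^ d), |θ (e m)| ≤ R * ((m.val : ℝ) + 1) ^ (-(1 / p))

/-- The sparsity class `F_d(p) = {f : θ(f) ∈ wℓ^p(1/√M)}`, `M = 2^d`. -/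
def Fclass (d : ℕ) (p : ℝ) : Set (Cube d → ℝ) :=
  {f | wlp d p (1 / Real.sqrt (2 ^ d)) (theta f)}

/-- The class `F^{+,1}_d(p)` of probability densities in `F_d(p)`. -/
def FclassDens (d : ℕ) (p : ℝ) : Set (Cube d → ℝ) :=
  {f | f ∈ Fclass d p ∧ IsDensity f}

/-- Empirical Fourier–Walsh coefficient `θ̂_s = (1/n) ∑_i χ_s(x_i)`. -/
noncomputable def thetaHat {d n : ℕ} (xs : Fin n → Cube d) (s : Cube d) : ℝ :=
  (1 / (n : ℝ)) * ∑ i, walsh s (xs i)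

/-- The weight estimate
`Ŵ_u = (1/n²) ∑_i ∑_j χ_u(π_k(x_i)) χ_u(π_k(x_j)) 1{σ_k(x_i) = σ_k(x_j)}`. -/
noncomputable def What {d : ℕ} (k : ℕ) (h : k ≤ d) {n : ℕ} (xs : Fin n → Cube d)
    (u : Cube k) : ℝ :=
  (1 / (n : ℝ) ^ 2) * ∑ i, ∑ j,
    walsh u (pref k h (xs i)) * walsh u (pref k h (xs j)) *
      (if suff k h (xs i) = suff k h (xs j) then (1 : ℝ) else 0)

/-- `f_u = ∑_{v ∈ {0,1}^{d-k}} θ_{uv} χ_v ∈ L²(μ_{d-k})`. -/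
noncomputable def fu {d : ℕ} (k : ℕ) (h : k ≤ d) (f : Cube d → ℝ) (u : Cube k) :
    Cube (d - k) → ℝ :=
  fun y => ∑ v : Cube (d - k), theta f (concat h u v) * walsh v y

/-- The empirical counterpart `f̂_u = ∑_v θ̂_{uv} χ_v`. -/
noncomputable def fuHat {d n : ℕ} (k : ℕ) (h : k ≤ d) (xs : Fin n → Cube d) (u : Cube k) :
    Cube (d - k) → ℝ :=
  fun y => ∑ v : Cube (d - k), thetaHat xs (concat h u v) * walsh v y

/-- The weight `W_u = ∑_v θ_{uv}²`. -/
noncomputable def Wu {d : ℕ} (k : ℕ) (h : k ≤ d) (f : Cube d → ℝ) (u : Cube k) : ℝ :=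
  ∑ v : Cube (d - k), (theta f (concat h u v)) ^ 2

/-- The empirical weight `Ŵ_u = ∑_v θ̂_{uv}²` (in direct form). -/
noncomputable def WuHat {d n : ℕ} (k : ℕ) (h : k ≤ d) (xs : Fin n → Cube d) (u : Cube k) : ℝ :=
  ∑ v : Cube (d - k), (thetaHat xs (concat h u v)) ^ 2

/-- The recursive Walsh thresholding estimator
`f̂_RWT = ∑_{s ∈ A(λ)} θ̂_s χ_s`, where
`A(λ) = {s : Ŵ_{π_k(s)} ≥ λ_k for all 1 ≤ k ≤ d}`. -/
noncomputable def fRWT {d n : ℕ} (lam : ℕ → ℝ) (xs : Fin n → Cube d) : Cube d → ℝ :=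
  fun x => ∑ s : Cube d,
    Set.indicator
      {s' : Cube d | ∀ k, ∀ hk : k ≤ d, 1 ≤ k → lam k ≤ What k hk xs (pref k hk s')}
      (fun s' => thetaHat xs s') s * walsh s x

/-- Expectation over an i.i.d. sample `X_1, …, X_n` drawn from the density `f`:
`E_f[g(X₁,…,Xₙ)] = ∑_{x₁,…,xₙ} (∏_i f(xᵢ)) g(x₁,…,xₙ)`. -/
noncomputable def expSample {d n : ℕ} (f : Cube d → ℝ) (g : (Fin n → Cube d) → ℝ) : ℝ :=
  ∑ xs : Fin n → Cube d, (∏ i, f (xs i)) * g xs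

/-- The packing family `F(k,a)`: densities whose Walsh coefficient at the lexicographically
first string `s₁ = (0,…,0)` equals `1/√M`, and whose remaining `M-1` coefficients have exactly
`k` nonzero entries, each equal to `a` or `-a`. -/
def Fka (d k : ℕ) (a : ℝ) : Set (Cube d → ℝ) :=
  {f | theta f (fun _ => false) = 1 / Real.sqrt (2 ^ d) ∧
       (∀ s : Cube d, s ≠ (fun _ => false) →
          theta f s = 0 ∨ theta f s = a ∨ theta f s = -a) ∧
       {s : Cube d | s ≠ (fun _ => false) ∧ theta f s ≠ 0}.ncard = k}

/-! Assouad's hypercube argument. Perturb the uniform density `1/M` by `±a` on each of the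
`M - 1` non-constant Walsh coefficients, with `a² = 1/(16 n M)`. Because `n ≥ M^{2/p} ≥ M²`,
every such density lies in `F^{+,1}_d(p)` and is bounded below by `3/(4M)`. Two densities
differing in one sign are then so close that the Hellinger affinity of their `n`-sample laws
is at least `7/8`, hence their overlap `∑ min(P, Q)` is at least `1/4`, and any estimator
misses that coefficient by `≳ a²` in expectation under one of them. Averaging over all sign
patterns and summing over coefficients (Parseval) gives a risk `≥ (M - 1) a² / 4 ≥ 1/(128 n)`
for some sign pattern. -/

section Walsh

variable {k : ℕ}

lemma walsh_eq_prod (s x : Cube k) :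
    walsh s x = (∏ j, if s j = true ∧ x j = true then (-1 : ℝ) else 1) / √(2 ^ k) := by
  rw [walsh, dotc, ← Finset.prod_const, Finset.prod_filter]

lemma walsh_orthonormal (s t : Cube k) :
    ∑ x : Cube k, walsh s x * walsh t x = if s = t then 1 else 0 := by
  have h2 : (0 : ℝ) < 2 ^ k := by positivity
  let σ : Fin k → Bool → ℝ := fun j b =>
    (if s j = true ∧ b = true then -1 else 1) * (if t j = true ∧ b = true then -1 else 1)
  have hσ : ∀ j, ∑ b, σ j b = if s j = t j then 2 else 0 := by
    intro j
    cases hs : s j <;> cases ht : t j <;> norm_num [σ, Fintype.sum_bool, hs, ht]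
  calc ∑ x : Cube k, walsh s x * walsh t x
      = (∑ x : Cube k, ∏ j, σ j (x j)) / 2 ^ k := by
        simp only [walsh_eq_prod, div_mul_div_comm, Real.mul_self_sqrt h2.le,
          ← Finset.prod_mul_distrib, Finset.sum_div, σ]
    _ = (∏ j, if s j = t j then (2 : ℝ) else 0) / 2 ^ k := by
        rw [← Fintype.prod_sum, Finset.prod_congr rfl fun j _ => hσ j]
    _ = if s = t then 1 else 0 := by
        by_cases hst : s = t
        · simp [hst, h2.ne']
        · obtain ⟨j, hj⟩ := Function.ne_iff.mp hst
          rw [Finset.prod_eq_zero (Finset.mem_univ j) (if_neg hj), if_neg hst, zero_div]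

lemma walsh_comm (s x : Cube k) : walsh s x = walsh x s := by
  simp only [walsh, dotc, and_comm]

lemma walsh_complete (x y : Cube k) :
    ∑ s : Cube k, walsh s x * walsh s y = if x = y then 1 else 0 := by
  simpa only [walsh_comm _ x, walsh_comm _ y] using walsh_orthonormal x y

lemma walsh_sq (s x : Cube k) : walsh s x ^ 2 = 1 / 2 ^ k := by
  rw [walsh, div_pow, ← pow_mul, mul_comm, pow_mul, Real.sq_sqrt (by positivity)]
  norm_num

lemma abs_walsh (s x : Cube k) : |walsh s x| = 1 / √(2 ^ k) := by
  rw [walsh, abs_div, abs_pow, abs_neg, abs_one, one_pow, abs_of_nonneg (Real.sqrt_nonneg _)]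

lemma walsh_zero_left (x : Cube k) : walsh (fun _ => false) x = 1 / √(2 ^ k) := by
  simp [walsh, dotc]

lemma sum_eq_sqrt_mul_theta_zero (f : Cube k → ℝ) :
    ∑ x, f x = √(2 ^ k) * theta f (fun _ => false) := by
  have hs : √((2 : ℝ) ^ k) ≠ 0 := by positivity
  simp only [theta, ip, walsh_zero_left, ← Finset.sum_mul, one_div]
  field_simp

lemma theta_sum_mul_walsh (c : Cube k → ℝ) (s : Cube k) :
    theta (fun x => ∑ t, c t * walsh t x) s = c s := by
  simp only [theta, ip, Finset.sum_mul]
  rw [Finset.sum_comm]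
  simp [mul_assoc, ← Finset.mul_sum, walsh_orthonormal]

lemma theta_sub (f g : Cube k → ℝ) (s : Cube k) :
    theta (fun x => f x - g x) s = theta f s - theta g s := by
  simp only [theta, ip, sub_mul, Finset.sum_sub_distrib]

lemma parseval (g : Cube k → ℝ) : ∑ s, theta g s ^ 2 = ∑ x, g x ^ 2 := by
  simp only [theta, ip, sq, Finset.sum_mul_sum]
  rw [Finset.sum_comm]
  refine Finset.sum_congr rfl fun x _ => ?_
  rw [Finset.sum_comm]
  simp [mul_mul_mul_comm, ← Finset.mul_sum, walsh_complete]

lemma sum_sq_theta_sub_le (S : Finset (Cube k)) (f g : Cube k → ℝ) :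
    ∑ s ∈ S, (theta f s - theta g s) ^ 2 ≤ ∑ x, (f x - g x) ^ 2 := by
  rw [← parseval]
  simp only [theta_sub]
  exact Finset.sum_le_sum_of_subset_of_nonneg (Finset.subset_univ S) fun _ _ _ => sq_nonneg _

end Walsh

section FiniteProbability

variable {β : Type*} [Fintype β] {P Q : β → ℝ}

lemma expSample_mono {d n : ℕ} {f : Cube d → ℝ} (hf : ∀ x, 0 ≤ f x)
    {g h : (Fin n → Cube d) → ℝ} (hgh : ∀ xs, g xs ≤ h xs) :
    expSample f g ≤ expSample f h :=
  Finset.sum_le_sum fun xs _ =>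
    mul_le_mul_of_nonneg_left (hgh xs) (Finset.prod_nonneg fun i _ => hf (xs i))

lemma expSample_finset_sum {ι : Type*} {d n : ℕ} (f : Cube d → ℝ) (S : Finset ι)
    (g : ι → (Fin n → Cube d) → ℝ) :
    expSample f (fun xs => ∑ s ∈ S, g s xs) = ∑ s ∈ S, expSample f (g s) := by
  simp only [expSample, Finset.mul_sum]
  exact Finset.sum_comm

lemma sum_sqrt_prod_mul_prod {α : Type*} [Fintype α] (n : ℕ) {f g : α → ℝ}
    (hf : ∀ x, 0 ≤ f x) (hg : ∀ x, 0 ≤ g x) :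
    ∑ xs : Fin n → α, √((∏ i, f (xs i)) * ∏ i, g (xs i))
      = (∑ x, √(f x * g x)) ^ n := by
  rw [Fintype.sum_pow]
  refine Finset.sum_congr rfl fun xs _ => ?_
  rw [← Finset.prod_mul_distrib, Real.sqrt_prod _ fun i _ => mul_nonneg (hf _) (hg _)]

lemma two_mul_mul_div_add_le_sqrt_mul {x y : ℝ} (hx : 0 ≤ x) (hy : 0 ≤ y) :
    2 * (x * y) / (x + y) ≤ √(x * y) := by
  rcases (add_nonneg hx hy).eq_or_lt with hxy | hxy
  · rw [← hxy, div_zero]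
    exact Real.sqrt_nonneg _
  have hsq := Real.sq_sqrt (mul_nonneg hx hy)
  rw [div_le_iff₀ hxy]
  nlinarith [Real.sqrt_nonneg (x * y), sq_nonneg (x - y), sq_nonneg (2 * √(x * y) - (x + y))]

/-- The left side is the sum of the harmonic means `2PQ/(P + Q)`, each at most `√(PQ)`. -/
lemma one_sub_sum_sq_sub_div_le_sum_sqrt_mul (hP : ∀ x, 0 ≤ P x) (hQ : ∀ x, 0 ≤ Q x)
    (hP1 : ∑ x, P x = 1) (hQ1 : ∑ x, Q x = 1) :
    1 - ∑ x, (P x - Q x) ^ 2 / (2 * (P x + Q x)) ≤ ∑ x, √(P x * Q x) := by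
  have hpt : ∀ x, (P x + Q x) / 2 - (P x - Q x) ^ 2 / (2 * (P x + Q x))
      = 2 * (P x * Q x) / (P x + Q x) := by
    intro x
    rcases (add_nonneg (hP x) (hQ x)).eq_or_lt with h | h
    · have hP0 : P x = 0 := by linarith [hP x, hQ x]
      have hQ0 : Q x = 0 := by linarith [hP x, hQ x]
      simp [hP0, hQ0]
    · field_simp
      ring
  calc 1 - ∑ x, (P x - Q x) ^ 2 / (2 * (P x + Q x))
      = ∑ x, ((P x + Q x) / 2 - (P x - Q x) ^ 2 / (2 * (P x + Q x))) := by
        rw [Finset.sum_sub_distrib, ← Finset.sum_div, Finset.sum_add_distrib, hP1, hQ1]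
        norm_num
    _ ≤ ∑ x, √(P x * Q x) := by
        simp only [hpt]
        exact Finset.sum_le_sum fun x _ => two_mul_mul_div_add_le_sqrt_mul (hP x) (hQ x)

/-- Le Cam: Cauchy–Schwarz for `√(PQ) = √min · √max`, using `∑ max = 2 - ∑ min`. -/
lemma sq_sum_sqrt_mul_le (hP : ∀ x, 0 ≤ P x) (hQ : ∀ x, 0 ≤ Q x)
    (hP1 : ∑ x, P x = 1) (hQ1 : ∑ x, Q x = 1) :
    (∑ x, √(P x * Q x)) ^ 2 ≤ (∑ x, min (P x) (Q x)) * (2 - ∑ x, min (P x) (Q x)) := by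
  have hmax : ∑ x, max (P x) (Q x) = 2 - ∑ x, min (P x) (Q x) := by
    rw [eq_sub_iff_add_eq, ← Finset.sum_add_distrib]
    simp only [max_add_min, Finset.sum_add_distrib, hP1, hQ1]
    norm_num
  rw [← hmax]
  refine Finset.sum_sq_le_sum_mul_sum_of_sq_le_mul _ (fun x _ => le_min (hP x) (hQ x))
    (fun x _ => (hP x).trans (le_max_left _ _)) fun x _ => ?_
  rw [Real.sq_sqrt (mul_nonneg (hP x) (hQ x)), min_mul_max]

lemma two_mul_sq_mul_sum_min_le (hP : ∀ x, 0 ≤ P x) (hQ : ∀ x, 0 ≤ Q x) (T : β → ℝ)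
    (b : ℝ) :
    2 * b ^ 2 * ∑ x, min (P x) (Q x)
      ≤ ∑ x, P x * (T x - b) ^ 2 + ∑ x, Q x * (T x + b) ^ 2 := by
  rw [Finset.mul_sum, ← Finset.sum_add_distrib]
  refine Finset.sum_le_sum fun x _ => ?_
  calc 2 * b ^ 2 * min (P x) (Q x)
      ≤ min (P x) (Q x) * (T x - b) ^ 2 + min (P x) (Q x) * (T x + b) ^ 2 := by
        nlinarith [le_min (hP x) (hQ x), sq_nonneg (T x)]
    _ ≤ P x * (T x - b) ^ 2 + Q x * (T x + b) ^ 2 := by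
        gcongr
        exacts [min_le_left _ _, min_le_right _ _]

lemma card_mul_le_two_mul_sum_of_involutive {σ : β → β} (hσ : Function.Involutive σ)
    {D : β → ℝ} {c : ℝ} (h : ∀ x, c ≤ D x + D (σ x)) :
    Fintype.card β * c ≤ 2 * ∑ x, D x := by
  have hperm : ∑ x, D (σ x) = ∑ x, D x := Equiv.sum_comp hσ.toPerm D
  calc Fintype.card β * c = ∑ _x : β, c := by simp
    _ ≤ ∑ x, (D x + D (σ x)) := Finset.sum_le_sum fun x _ => h x
    _ = 2 * ∑ x, D x := by rw [Finset.sum_add_distrib, hperm, two_mul]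

end FiniteProbability

lemma wlp_of_abs_eq {d : ℕ} {p R a : ℝ} {θ : Cube d → ℝ}
    (h0 : |θ (fun _ => false)| = R) (hθ : ∀ s, s ≠ (fun _ => false) → |θ s| = a)
    (ha : ∀ m : ℕ, m < 2 ^ d → a ≤ R * ((m : ℝ) + 1) ^ (-(1 / p))) : wlp d p R θ := by
  have : NeZero (2 ^ d) := ⟨by positivity⟩
  let e₀ : Fin (2 ^ d) ≃ Cube d := (Fintype.equivFinOfCardEq (by simp)).symm
  let e : Fin (2 ^ d) ≃ Cube d := (Equiv.swap 0 (e₀.symm fun _ => false)).trans e₀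
  have he : ∀ i, e i = (fun _ => false) ↔ i = 0 := fun i => by
    rw [← e.apply_eq_iff_eq (y := 0)]
    simp [e]
  have habs : ∀ i, |θ (e i)| = if i = 0 then R else a := fun i => by
    split_ifs with hi
    · rw [(he i).mpr hi, h0]
    · exact hθ _ fun h => hi ((he i).mp h)
  have haR : a ≤ R := by simpa using ha 0 (Nat.two_pow_pos d)
  refine ⟨e, fun i j hij => ?_, fun m => ?_⟩
  · rw [habs, habs]
    by_cases hi : i = 0
    · split_ifs <;> simp_all
    · have hj : j ≠ 0 := fun hj => hi (nonpos_iff_eq_zero.mp (hj ▸ hij))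
      simp [hi, hj]
  · rw [habs]
    split_ifs with hm
    · simp [hm]
    · exact ha m m.isLt

section Perturbation

variable {d : ℕ} {a : ℝ}

noncomputable def pertCoeff (a : ℝ) (τ : Cube d → Bool) (s : Cube d) : ℝ :=
  if s = (fun _ => false) then 1 / √(2 ^ d) else if τ s then a else -a

noncomputable def pertDensity (a : ℝ) (τ : Cube d → Bool) : Cube d → ℝ :=
  fun x => ∑ t, pertCoeff a τ t * walsh t x

lemma theta_pertDensity (τ : Cube d → Bool) (s : Cube d) :
    theta (pertDensity a τ) s = pertCoeff a τ s :=
  theta_sum_mul_walsh _ s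

lemma abs_pertCoeff (ha : 0 ≤ a) (τ : Cube d → Bool) {s : Cube d}
    (hs : s ≠ fun _ => false) : |pertCoeff a τ s| = a := by
  rw [pertCoeff, if_neg hs]
  split_ifs <;> simp [abs_of_nonneg ha]

lemma sq_pertCoeff (τ : Cube d → Bool) {s : Cube d} (hs : s ≠ fun _ => false) :
    pertCoeff a τ s ^ 2 = a ^ 2 := by
  rw [pertCoeff, if_neg hs]
  split_ifs <;> simp

lemma pertCoeff_update_self (τ : Cube d → Bool) {s : Cube d} (hs : s ≠ fun _ => false) :
    pertCoeff a (Function.update τ s (!τ s)) s = -pertCoeff a τ s := by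
  unfold pertCoeff
  cases τ s <;> simp [hs]

lemma pertDensity_sub_update (τ : Cube d → Bool) {s : Cube d} (hs : s ≠ fun _ => false)
    (x : Cube d) :
    pertDensity a τ x - pertDensity a (Function.update τ s (!τ s)) x
      = 2 * pertCoeff a τ s * walsh s x := by
  have hcoeff : ∀ t, t ≠ s →
      pertCoeff a (Function.update τ s (!τ s)) t = pertCoeff a τ t := fun t ht => by
    simp only [pertCoeff, Function.update_of_ne ht]
  simp only [pertDensity, ← Finset.sum_sub_distrib]
  rw [Finset.sum_eq_single s (fun t _ ht => by rw [hcoeff t ht, sub_self])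
    (by simp), pertCoeff_update_self τ hs]
  ring

lemma sum_pertDensity (τ : Cube d → Bool) : ∑ x, pertDensity a τ x = 1 := by
  rw [sum_eq_sqrt_mul_theta_zero, theta_pertDensity, pertCoeff, if_pos rfl,
    mul_one_div_cancel (by positivity)]

lemma abs_pertDensity_sub_le (ha : 0 ≤ a) (τ : Cube d → Bool) (x : Cube d) :
    |pertDensity a τ x - 1 / 2 ^ d| ≤ a * √(2 ^ d) := by
  have hM : (0 : ℝ) < 2 ^ d := by positivity
  have hzero : pertCoeff a τ (fun _ => false) * walsh (fun _ => false) x = 1 / 2 ^ d := by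
    rw [pertCoeff, if_pos rfl, walsh_zero_left, div_mul_div_comm, one_mul,
      Real.mul_self_sqrt hM.le]
  rw [pertDensity, ← Finset.add_sum_erase _ _ (Finset.mem_univ _), hzero, add_sub_cancel_left]
  calc |∑ t ∈ Finset.univ.erase (fun _ => false), pertCoeff a τ t * walsh t x|
      ≤ ∑ t ∈ Finset.univ.erase (fun _ => false), |pertCoeff a τ t * walsh t x| :=
        Finset.abs_sum_le_sum_abs _ _
    _ = ∑ _t ∈ Finset.univ.erase (fun _ => false), a * (1 / √(2 ^ d)) :=
        Finset.sum_congr rfl fun t ht => by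
          rw [abs_mul, abs_pertCoeff ha τ (Finset.ne_of_mem_erase ht), abs_walsh]
    _ ≤ ∑ _t : Cube d, a * (1 / √(2 ^ d)) :=
        Finset.sum_le_sum_of_subset_of_nonneg (Finset.erase_subset _ _)
          fun _ _ _ => by positivity
    _ = a * √(2 ^ d) := by
        have hs : √((2 : ℝ) ^ d) ≠ 0 := by positivity
        simp only [Finset.sum_const, Finset.card_univ, Fintype.card_fun, Fintype.card_bool,
          Fintype.card_fin, nsmul_eq_mul, Nat.cast_pow, Nat.cast_ofNat]
        field_simp
        rw [Real.sq_sqrt hM.le, mul_comm]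

lemma pertDensity_ge (ha : 0 ≤ a) (hsmall : a * √(2 ^ d) ≤ 1 / (4 * 2 ^ d))
    (τ : Cube d → Bool) (x : Cube d) : 3 / (4 * 2 ^ d) ≤ pertDensity a τ x := by
  have h := (abs_le.mp (abs_pertDensity_sub_le ha τ x)).1
  have : (3 : ℝ) / (4 * 2 ^ d) = 1 / 2 ^ d - 1 / (4 * 2 ^ d) := by field_simp; norm_num
  linarith

lemma pertDensity_mem_FclassDens {p : ℝ} (ha : 0 ≤ a)
    (hsmall : a * √(2 ^ d) ≤ 1 / (4 * 2 ^ d))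
    (hwlp : ∀ m : ℕ, m < 2 ^ d → a ≤ 1 / √(2 ^ d) * ((m : ℝ) + 1) ^ (-(1 / p)))
    (τ : Cube d → Bool) : pertDensity a τ ∈ FclassDens d p := by
  refine ⟨?_, fun x => le_trans (by positivity) (pertDensity_ge ha hsmall τ x),
    sum_pertDensity τ⟩
  refine wlp_of_abs_eq ?_ (fun s hs => ?_) hwlp
  · rw [theta_pertDensity, pertCoeff, if_pos rfl, abs_of_nonneg (by positivity)]
  · rw [theta_pertDensity, abs_pertCoeff ha τ hs]

end Perturbation

section Assouad

variable {d n : ℕ} {a : ℝ}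

lemma sum_sqrt_pertDensity_mul_update_ge (ha : 0 ≤ a)
    (hsmall : a * √(2 ^ d) ≤ 1 / (4 * 2 ^ d)) (τ : Cube d → Bool) {s : Cube d}
    (hs : s ≠ fun _ => false) :
    1 - 4 * 2 ^ d * a ^ 2 / 3
      ≤ ∑ x, √(pertDensity a τ x * pertDensity a (Function.update τ s (!τ s)) x) := by
  set τ' := Function.update τ s (!τ s)
  have hpos : ∀ σ x, 0 < pertDensity a σ x := fun σ x =>
    lt_of_lt_of_le (by positivity) (pertDensity_ge ha hsmall σ x)
  have hterm : ∀ x, (pertDensity a τ x - pertDensity a τ' x) ^ 2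
      / (2 * (pertDensity a τ x + pertDensity a τ' x)) ≤ 4 * a ^ 2 / 3 := by
    intro x
    have hsq : (pertDensity a τ x - pertDensity a τ' x) ^ 2 = 4 * a ^ 2 / 2 ^ d := by
      rw [pertDensity_sub_update τ hs, mul_pow, mul_pow, sq_pertCoeff τ hs, walsh_sq]
      ring
    have hsum : 3 / 2 ^ d ≤ 2 * (pertDensity a τ x + pertDensity a τ' x) := by
      have h1 := pertDensity_ge ha hsmall τ x
      have h2 := pertDensity_ge ha hsmall τ' x
      have : (3 : ℝ) / 2 ^ d = 4 * (3 / (4 * 2 ^ d)) := by field_simp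
      linarith
    rw [hsq, div_le_iff₀ (by linarith [hpos τ x, hpos τ' x])]
    calc 4 * a ^ 2 / 2 ^ d = 4 * a ^ 2 / 3 * (3 / 2 ^ d) := by field_simp
      _ ≤ _ := by gcongr
  have hchi : ∑ x, (pertDensity a τ x - pertDensity a τ' x) ^ 2
      / (2 * (pertDensity a τ x + pertDensity a τ' x)) ≤ 4 * 2 ^ d * a ^ 2 / 3 := by
    calc _ ≤ ∑ _x : Cube d, 4 * a ^ 2 / 3 := Finset.sum_le_sum fun x _ => hterm x
      _ = 4 * 2 ^ d * a ^ 2 / 3 := by simp; ring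
  have := one_sub_sum_sq_sub_div_le_sum_sqrt_mul (fun x => (hpos τ x).le)
    (fun x => (hpos τ' x).le) (sum_pertDensity τ) (sum_pertDensity τ')
  linarith

noncomputable def coeffRisk (est : (Fin n → Cube d) → Cube d → ℝ) (a : ℝ)
    (τ : Cube d → Bool) (s : Cube d) : ℝ :=
  expSample (pertDensity a τ) fun xs => (theta (est xs) s - pertCoeff a τ s) ^ 2

lemma coeffRisk_add_update_ge (est : (Fin n → Cube d) → Cube d → ℝ) (ha : 0 ≤ a)
    (hsmall : a * √(2 ^ d) ≤ 1 / (4 * 2 ^ d)) (hn : 16 * n * 2 ^ d * a ^ 2 ≤ 1)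
    (τ : Cube d → Bool) {s : Cube d} (hs : s ≠ fun _ => false) :
    a ^ 2 / 2 ≤ coeffRisk est a τ s + coeffRisk est a (Function.update τ s (!τ s)) s := by
  set τ' := Function.update τ s (!τ s)
  set x := 4 * 2 ^ d * a ^ 2 / 3
  have hM : (1 : ℝ) ≤ 2 ^ d := one_le_pow₀ one_le_two
  have hx : x ≤ 1 / 12 := by
    have hquarter : a * √(2 ^ d) ≤ 1 / 4 :=
      hsmall.trans (one_div_le_one_div_of_le (by norm_num) (by linarith))
    have hsq : (a * √(2 ^ d)) ^ 2 = 2 ^ d * a ^ 2 := by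
      rw [mul_pow, Real.sq_sqrt (by positivity), mul_comm]
    have := pow_le_pow_left₀ (by positivity) hquarter 2
    simp only [x]
    linarith
  have hnonneg : ∀ σ x, 0 ≤ pertDensity a σ x := fun σ x =>
    le_trans (by positivity) (pertDensity_ge ha hsmall σ x)
  let P : (Cube d → Bool) → (Fin n → Cube d) → ℝ :=
    fun σ xs => ∏ i, pertDensity a σ (xs i)
  have hPnonneg : ∀ σ xs, 0 ≤ P σ xs := fun σ xs =>
    Finset.prod_nonneg fun i _ => hnonneg σ (xs i)
  have hP1 : ∀ σ, ∑ xs, P σ xs = 1 := fun σ => by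
    simp only [P, ← Fintype.sum_pow, sum_pertDensity, one_pow]
  have haffinity : 7 / 8 ≤ ∑ xs, √(P τ xs * P τ' xs) := by
    rw [sum_sqrt_prod_mul_prod n (hnonneg τ) (hnonneg τ')]
    calc (7 : ℝ) / 8 ≤ 1 + n * -x := by simp only [x]; nlinarith
      _ ≤ (1 + -x) ^ n := one_add_mul_le_pow (by linarith) n
      _ ≤ _ := pow_le_pow_left₀ (by linarith) (by
          simpa [sub_eq_add_neg] using sum_sqrt_pertDensity_mul_update_ge ha hsmall τ hs) n
  have hoverlap : 1 / 4 ≤ ∑ xs, min (P τ xs) (P τ' xs) := by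
    have := sq_sum_sqrt_mul_le (hPnonneg τ) (hPnonneg τ') (hP1 τ) (hP1 τ')
    nlinarith
  have htwo := two_mul_sq_mul_sum_min_le (hPnonneg τ) (hPnonneg τ')
    (fun xs => theta (est xs) s) (pertCoeff a τ s)
  simp only [sq_pertCoeff τ hs] at htwo
  have hrisk : coeffRisk est a τ s + coeffRisk est a τ' s
      = ∑ xs, P τ xs * (theta (est xs) s - pertCoeff a τ s) ^ 2
        + ∑ xs, P τ' xs * (theta (est xs) s + pertCoeff a τ s) ^ 2 := by
    simp only [coeffRisk, expSample, τ', pertCoeff_update_self τ hs, sub_neg_eq_add, P]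
  rw [hrisk]
  nlinarith [sq_nonneg a]

lemma exists_pertDensity_risk_ge (est : (Fin n → Cube d) → Cube d → ℝ) (ha : 0 ≤ a)
    (hsmall : a * √(2 ^ d) ≤ 1 / (4 * 2 ^ d)) (hn : 16 * n * 2 ^ d * a ^ 2 ≤ 1) :
    ∃ τ : Cube d → Bool, (2 ^ d - 1) * a ^ 2 / 4
      ≤ expSample (pertDensity a τ) fun xs => ∑ x, (est xs x - pertDensity a τ x) ^ 2 := by
  set S := Finset.univ.erase (fun _ : Fin d => false)
  have hS : (S.card : ℝ) = 2 ^ d - 1 := by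
    rw [Finset.card_erase_of_mem (Finset.mem_univ _), Finset.card_univ, Nat.cast_sub]
    · simp
    · exact Fintype.card_pos
  have hnonneg : ∀ σ x, 0 ≤ pertDensity a σ x := fun σ x =>
    le_trans (by positivity) (pertDensity_ge ha hsmall σ x)
  have hparseval : ∀ τ, ∑ s ∈ S, coeffRisk est a τ s
      ≤ expSample (pertDensity a τ) fun xs => ∑ x, (est xs x - pertDensity a τ x) ^ 2 := by
    intro τ
    simp only [coeffRisk, ← expSample_finset_sum, ← theta_pertDensity (a := a) τ]
    exact expSample_mono (hnonneg τ) fun xs => sum_sq_theta_sub_le S _ _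
  have hflip : ∀ s ∈ S, Fintype.card (Cube d → Bool) * (a ^ 2 / 2)
      ≤ 2 * ∑ τ, coeffRisk est a τ s := fun s hs =>
    card_mul_le_two_mul_sum_of_involutive (fun τ => by simp)
      fun τ => coeffRisk_add_update_ge est ha hsmall hn τ (Finset.ne_of_mem_erase hs)
  have htotal : ∑ _τ : Cube d → Bool, (2 ^ d - 1) * a ^ 2 / 4
      ≤ ∑ τ, expSample (pertDensity a τ)
          fun xs => ∑ x, (est xs x - pertDensity a τ x) ^ 2 :=
    calc ∑ _τ : Cube d → Bool, (2 ^ d - 1) * a ^ 2 / 4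
        = ∑ _s ∈ S, Fintype.card (Cube d → Bool) * (a ^ 2 / 2) / 2 := by
          simp only [Finset.sum_const, Finset.card_univ, nsmul_eq_mul, hS]
          ring
      _ ≤ ∑ s ∈ S, ∑ τ, coeffRisk est a τ s :=
          Finset.sum_le_sum fun s hs => by linarith [hflip s hs]
      _ = ∑ τ, ∑ s ∈ S, coeffRisk est a τ s := Finset.sum_comm
      _ ≤ _ := Finset.sum_le_sum fun τ _ => hparseval τ
  obtain ⟨τ, -, hτ⟩ := Finset.exists_le_of_sum_le Finset.univ_nonempty htotal
  exact ⟨τ, hτ⟩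

end Assouad

lemma le_one_div_sqrt_mul_rpow_neg {a M n t p : ℝ} (hM : 0 < M) (ht : 0 < t)
    (htn : t ^ (2 / p) ≤ n) (ha : 0 ≤ a) (ha2 : a ^ 2 * (M * n) ≤ 1) :
    a ≤ 1 / √M * t ^ (-(1 / p)) := by
  have ht2 : 0 < t ^ (2 / p) := Real.rpow_pos_of_pos ht _
  have hsq : (t ^ (-(1 / p))) ^ 2 = (t ^ (2 / p))⁻¹ := by
    rw [← Real.rpow_natCast, ← Real.rpow_mul ht.le, ← Real.rpow_neg ht.le]
    ring_nf
  rw [← pow_le_pow_iff_left₀ ha (by positivity) two_ne_zero, mul_pow, div_pow,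
    Real.sq_sqrt hM.le, hsq, one_pow, one_div_mul_eq_div, div_eq_mul_inv, ← mul_inv,
    ← one_div, le_div_iff₀ (by positivity), mul_comm (t ^ _)]
  calc a ^ 2 * (M * t ^ (2 / p)) ≤ a ^ 2 * (M * n) := by gcongr
    _ ≤ 1 := ha2

lemma sqrt_one_div_mul_sqrt_le {M n : ℝ} (hM : 0 < M) (hMn : M ^ 2 ≤ n) :
    √(1 / (16 * n * M)) * √M ≤ 1 / (4 * M) := by
  have hn : 0 < n := by nlinarith
  rw [← Real.sqrt_mul (by positivity), Real.sqrt_le_left (by positivity), div_pow,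
    one_div_mul_eq_div, div_le_div_iff₀ (by positivity) (by positivity)]
  nlinarith

/-- **Theorem 2, part 2.** There exists an absolute constant `C > 0` such that
for every `0 < p ≤ 1`, every `d` with `M = 2^d ≥ 4`, and every sample size `n ≥ M^{2/p}`,
every estimator `f̂_n` (a map from samples to functions) has risk at least `C/n` for some
`f ∈ F^{+,1}_d(p)`; in particular the minimax risk is bounded below by `C/n`. -/
theorem minimax_lower_large :
    ∃ C : ℝ, 0 < C ∧
      ∀ p : ℝ, 0 < p → p ≤ 1 →
      ∀ d : ℕ, 4 ≤ 2 ^ d →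
      ∀ n : ℕ, ((2 : ℝ) ^ d) ^ (2 / p) ≤ (n : ℝ) →
      ∀ est : (Fin n → Cube d) → (Cube d → ℝ),
        ∃ f ∈ FclassDens d p,
          C / (n : ℝ) ≤ expSample f (fun xs => ∑ x : Cube d, (est xs x - f x) ^ 2) := by
  refine ⟨1 / 128, by norm_num, fun p hp hp1 d hd n hn est => ?_⟩
  have hM : (4 : ℝ) ≤ 2 ^ d := by exact_mod_cast hd
  have hMn : ((2 : ℝ) ^ d) ^ 2 ≤ n := by
    refine le_trans ?_ hn
    rw [← Real.rpow_natCast]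
    exact Real.rpow_le_rpow_of_exponent_le (by linarith)
      (by rw [le_div_iff₀ hp]; push_cast; linarith)
  have hn0 : (0 : ℝ) < n := by nlinarith
  set a := √(1 / (16 * n * 2 ^ d))
  have ha2 : a ^ 2 = 1 / (16 * n * 2 ^ d) := Real.sq_sqrt (by positivity)
  have ha : 0 ≤ a := Real.sqrt_nonneg _
  have hsmall : a * √(2 ^ d) ≤ 1 / (4 * 2 ^ d) := sqrt_one_div_mul_sqrt_le (by positivity) hMn
  have hwlp : ∀ m : ℕ, m < 2 ^ d → a ≤ 1 / √(2 ^ d) * ((m : ℝ) + 1) ^ (-(1 / p)) := by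
    intro m hm
    have hm' : (m : ℝ) + 1 ≤ 2 ^ d := by exact_mod_cast hm
    refine le_one_div_sqrt_mul_rpow_neg (by positivity) (by positivity)
      ((Real.rpow_le_rpow (by positivity) hm' (by positivity)).trans hn) ha ?_
    rw [ha2]
    field_simp
    linarith
  obtain ⟨τ, hτ⟩ :=
    exists_pertDensity_risk_ge est ha hsmall (by rw [ha2]; field_simp; linarith)
  refine ⟨pertDensity a τ, pertDensity_mem_FclassDens ha hsmall hwlp τ, le_trans ?_ hτ⟩
  rw [ha2, div_le_iff₀ hn0]
  field_simp
  linarith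

end RWT
end

section
/- Let M = 2^d and let a > 0 satisfy (M−1)a ≤ 1/(2√M) and a ≤ M^{−1/2}·M^{−1/p} for some 0 < p ≤ 1. Then there exists a subset F̃(M−1,a) ⊆ F(M−1,a) such that (i) ‖f − f′‖²_{L²(μ_d)} ≥ (M−1)a² for all distinct f, f′ ∈ F̃(M−1,a), and (ii) log|F̃(M−1,a)| ≥ (M−1)/8. -/
open scoped BigOperators

namespace RWT

/-! A sign vector `ω` on the `M - 1` nonzero frequencies gives the function with Walsh
coefficients `1/√M` at `0` and `±a` elsewhere; by Parseval, two such functions are at squared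
distance `4a²` times the Hamming distance of their sign vectors. A maximal code in `{0,1}^m`,
`m = M - 1`, with minimum distance `r + 1`, `r = ⌊m/4⌋`, covers the cube by Hamming balls of
radius `r`, whose volume is at most `4^m / 3^(m-r)` (compare with `(1 + 3)^m`). Hence it has at
least `(2/4)^m 3^(3m/4) = (27/16)^(m/4)` words, and `log (27/16) ≥ 1/2`. -/

open Finset

section Walsh

variable {d : ℕ}

lemma neg_one_pow_dotc (s x : Cube d) :
    (-1 : ℝ) ^ dotc s x = ∏ j, if s j = true ∧ x j = true then -1 else 1 := by
  rw [dotc, card_filter, ← prod_pow_eq_pow_sum]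
  exact prod_congr rfl fun j _ => by split <;> simp

lemma sum_neg_one_pow_dotc_mul (s t : Cube d) :
    ∑ x : Cube d, (-1 : ℝ) ^ dotc s x * (-1) ^ dotc t x = if s = t then 2 ^ d else 0 := by
  simp_rw [neg_one_pow_dotc, ← prod_mul_distrib]
  rw [← Fintype.prod_sum (fun j (b : Bool) =>
    (if s j = true ∧ b = true then (-1 : ℝ) else 1) *
      (if t j = true ∧ b = true then -1 else 1))]
  split_ifs with hst
  · subst hst
    have hcoord (j : Fin d) : ∑ b : Bool, (if s j = true ∧ b = true then (-1 : ℝ) else 1) *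
        (if s j = true ∧ b = true then -1 else 1) = 2 := by
      cases s j <;> norm_num [Fintype.sum_bool]
    rw [prod_congr rfl fun j _ => hcoord j, prod_const, card_univ, Fintype.card_fin]
  · obtain ⟨j, hj⟩ : ∃ j, s j ≠ t j := Function.ne_iff.mp hst
    apply prod_eq_zero (mem_univ j)
    cases hs : s j <;> cases ht : t j <;> simp_all

lemma ip_walsh_walsh (s t : Cube d) : ip (walsh s) (walsh t) = if s = t then 1 else 0 := by
  have hsq : Real.sqrt (2 ^ d) * Real.sqrt (2 ^ d) = 2 ^ d := Real.mul_self_sqrt (by positivity)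
  simp_rw [ip, walsh, div_mul_div_comm, hsq, ← sum_div, sum_neg_one_pow_dotc_mul]
  split_ifs <;> simp

noncomputable def walshSynth (c : Cube d → ℝ) (x : Cube d) : ℝ := ∑ s, c s * walsh s x

lemma theta_walshSynth (c : Cube d → ℝ) (t : Cube d) : theta (walshSynth c) t = c t := by
  calc theta (walshSynth c) t = ∑ s, c s * ip (walsh s) (walsh t) := by
        simp_rw [theta, ip, walshSynth, sum_mul, mul_assoc, mul_sum]
        exact sum_comm
    _ = c t := by simp [ip_walsh_walsh]

lemma sum_sq_walshSynth (c : Cube d → ℝ) : ∑ x, walshSynth c x ^ 2 = ∑ s, c s ^ 2 := by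
  calc ∑ x, walshSynth c x ^ 2 = ∑ s, c s * theta (walshSynth c) s := by
        have hx (x : Cube d) : walshSynth c x ^ 2 = ∑ s, c s * (walshSynth c x * walsh s x) := by
          rw [sq]; nth_rw 2 [walshSynth]; rw [mul_sum]; ring_nf
        simp_rw [hx, theta, ip, mul_sum]
        exact sum_comm
    _ = ∑ s, c s ^ 2 := by simp_rw [theta_walshSynth, sq]

lemma walshSynth_sub (c c' : Cube d → ℝ) :
    walshSynth c - walshSynth c' = walshSynth (c - c') := by
  ext x
  simp [walshSynth, sub_mul, sum_sub_distrib]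

end Walsh

section HammingPacking

variable {ι β : Type*} [Fintype ι] [DecidableEq ι] [Fintype β] [DecidableEq β]

lemma card_hammingDist_lt_le (c : ι → Bool) (t : ℕ) :
    #{y | hammingDist y c < t} ≤ ∑ k ∈ range t, (Fintype.card ι).choose k := by
  have hinj : Function.Injective fun y : ι → Bool => ({i | y i ≠ c i} : Finset ι) := by
    intro y y' h
    funext i
    have hi := Finset.ext_iff.mp h i
    simp only [mem_filter, mem_univ, true_and] at hi
    revert hi
    cases y i <;> cases y' i <;> cases c i <;> simp
  calc #{y | hammingDist y c < t}
      ≤ #((range t).biUnion fun k => powersetCard k (univ : Finset ι)) := by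
        refine card_le_card_of_injOn _ (fun y hy => ?_) hinj.injOn
        simp only [coe_filter, Set.mem_ofPred_eq, mem_univ, true_and] at hy
        simp only [coe_biUnion, coe_range, Set.mem_iUnion, mem_coe, mem_powersetCard]
        exact ⟨_, hy, subset_univ _, rfl⟩
    _ ≤ ∑ k ∈ range t, #(powersetCard k (univ : Finset ι)) := card_biUnion_le
    _ = ∑ k ∈ range t, (Fintype.card ι).choose k := by simp_rw [card_powersetCard, card_univ]

lemma exists_hammingDist_packing_covering (r : ℕ) :
    ∃ S : Finset (ι → β), (∀ x ∈ S, ∀ y ∈ S, x ≠ y → r < hammingDist x y) ∧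
      ∀ y, ∃ c ∈ S, hammingDist y c ≤ r := by
  let packings : Finset (Finset (ι → β)) :=
    {A | ∀ x ∈ A, ∀ y ∈ A, x ≠ y → r < hammingDist x y}
  obtain ⟨S, hS, hmax⟩ := exists_max_image packings card ⟨∅, by simp [packings]⟩
  simp only [packings, mem_filter, mem_univ, true_and] at hS hmax
  refine ⟨S, hS, fun y => ?_⟩
  by_contra! hfar
  have hyS : y ∉ S := fun hy => by simpa using hfar y hy
  have hins : ∀ x ∈ insert y S, ∀ z ∈ insert y S, x ≠ z → r < hammingDist x z := by
    simp only [mem_insert]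
    rintro x (rfl | hx) z (rfl | hz) hne
    · exact absurd rfl hne
    · exact hfar z hz
    · exact hammingDist_comm z x ▸ hfar x hx
    · exact hS x hx z hz hne
  have := hmax _ hins
  rw [card_insert_of_notMem hyS] at this
  omega

theorem exists_hammingDist_packing (r : ℕ) :
    ∃ S : Finset (ι → Bool), (∀ x ∈ S, ∀ y ∈ S, x ≠ y → r < hammingDist x y) ∧
      2 ^ Fintype.card ι ≤ #S * ∑ k ∈ range (r + 1), (Fintype.card ι).choose k := by
  obtain ⟨S, hS, hcover⟩ := exists_hammingDist_packing_covering (ι := ι) (β := Bool) r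
  refine ⟨S, hS, ?_⟩
  have hsub : (univ : Finset (ι → Bool)) ⊆
      S.biUnion fun c => {y | hammingDist y c < r + 1} := by
    intro y _
    obtain ⟨c, hc, hyc⟩ := hcover y
    exact mem_biUnion.mpr ⟨c, hc, by simpa [Nat.lt_succ_iff] using hyc⟩
  calc 2 ^ Fintype.card ι = #(univ : Finset (ι → Bool)) := by simp
    _ ≤ ∑ c ∈ S, #{y | hammingDist y c < r + 1} := (card_le_card hsub).trans card_biUnion_le
    _ ≤ ∑ _c ∈ S, ∑ k ∈ range (r + 1), (Fintype.card ι).choose k :=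
        sum_le_sum fun c _ => card_hammingDist_lt_le c (r + 1)
    _ = _ := by rw [sum_const, smul_eq_mul]

end HammingPacking

lemma sum_range_choose_mul_three_pow_le (m r : ℕ) :
    (∑ k ∈ range (r + 1), m.choose k) * 3 ^ (m - r) ≤ 4 ^ m := by
  calc (∑ k ∈ range (r + 1), m.choose k) * 3 ^ (m - r)
      ≤ ∑ k ∈ range (r + 1), 1 ^ k * 3 ^ (m - k) * m.choose k := by
        rw [sum_mul]
        refine sum_le_sum fun k hk => ?_
        rw [one_pow, one_mul, mul_comm]
        exact Nat.mul_le_mul_right _ (Nat.pow_le_pow_right (by norm_num) (by simp at hk; omega))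
    _ ≤ ∑ k ∈ range (m + 1), 1 ^ k * 3 ^ (m - k) * m.choose k := by
        refine sum_le_sum_of_ne_zero fun k _ hk => ?_
        simp only [ne_eq, mul_eq_zero, Nat.choose_eq_zero_iff, not_or, not_lt] at hk
        simp [hk.2]
    _ = 4 ^ m := (add_pow 1 3 m).symm

lemma half_le_three_mul_log_three_sub_four_mul_log_two :
    (1 : ℝ) / 2 ≤ 3 * Real.log 3 - 4 * Real.log 2 := by
  have hlog : 3 * Real.log 3 - 4 * Real.log 2 = Real.log (27 / 16) := by
    rw [Real.log_div (by norm_num) (by norm_num), show (27 : ℝ) = 3 ^ 3 by norm_num,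
      show (16 : ℝ) = 2 ^ 4 by norm_num, Real.log_pow, Real.log_pow]
    push_cast; ring
  rw [hlog, Real.le_log_iff_exp_le (by norm_num)]
  have hsq : Real.exp (1 / 2) ^ 2 = Real.exp 1 := by rw [← Real.exp_nat_mul]; norm_num
  nlinarith [Real.exp_one_lt_d9, Real.exp_pos (1 / 2)]

lemma div_eight_le_log_of_two_pow_mul_three_pow_le {m r N : ℕ} (hr : 4 * r ≤ m)
    (h : 2 ^ m * 3 ^ (m - r) ≤ N * 4 ^ m) : (m : ℝ) / 8 ≤ Real.log N := by
  have hN : (0 : ℝ) < N := by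
    have : 0 < N * 4 ^ m := lt_of_lt_of_le (by positivity) h
    exact_mod_cast Nat.pos_of_mul_pos_right this
  have hlog := Real.log_le_log (by positivity)
    (show ((2 ^ m * 3 ^ (m - r) : ℕ) : ℝ) ≤ N * 4 ^ m by exact_mod_cast h)
  push_cast at hlog
  rw [Real.log_mul (by positivity) (by positivity), Real.log_mul (by positivity) (by positivity),
    Real.log_pow, Real.log_pow, show (4 : ℝ) = 2 ^ 2 by norm_num, ← pow_mul, Real.log_pow,
    Nat.cast_sub (by omega)] at hlog
  push_cast at hlog
  have hr' : (4 : ℝ) * r ≤ m := by exact_mod_cast hr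
  nlinarith [half_le_three_mul_log_three_sub_four_mul_log_two,
    Real.log_nonneg (show (1 : ℝ) ≤ 3 by norm_num)]

theorem exists_hammingDist_packing_log_card (ι : Type*) [Fintype ι] [DecidableEq ι] :
    ∃ S : Finset (ι → Bool),
      (∀ x ∈ S, ∀ y ∈ S, x ≠ y → Fintype.card ι ≤ 4 * hammingDist x y) ∧
      (Fintype.card ι : ℝ) / 8 ≤ Real.log #S := by
  set m := Fintype.card ι
  obtain ⟨S, hS, hcount⟩ := exists_hammingDist_packing (ι := ι) (m / 4)
  refine ⟨S, fun x hx y hy hxy => by have := hS x hx y hy hxy; omega, ?_⟩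
  refine div_eight_le_log_of_two_pow_mul_three_pow_le (r := m / 4) (by omega) ?_
  calc 2 ^ m * 3 ^ (m - m / 4)
      ≤ #S * (∑ k ∈ range (m / 4 + 1), m.choose k) * 3 ^ (m - m / 4) :=
        Nat.mul_le_mul_right _ hcount
    _ ≤ #S * 4 ^ m := by
        rw [mul_assoc]; exact Nat.mul_le_mul_left _ (sum_range_choose_mul_three_pow_le m _)

section Packing

variable {d : ℕ}

lemma card_nonzero_frequencies :
    Fintype.card {s : Cube d // s ≠ fun _ => false} = 2 ^ d - 1 := by
  rw [Fintype.card_subtype_compl, Fintype.card_subtype_eq, Fintype.card_fun, Fintype.card_bool,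
    Fintype.card_fin]

noncomputable def packingCoeff (a : ℝ) (ω : {s : Cube d // s ≠ fun _ => false} → Bool)
    (s : Cube d) : ℝ :=
  if h : s = fun _ => false then 1 / Real.sqrt (2 ^ d) else if ω ⟨s, h⟩ then a else -a

lemma walshSynth_packingCoeff_mem_Fka {a : ℝ} (ha : a ≠ 0)
    (ω : {s : Cube d // s ≠ fun _ => false} → Bool) :
    walshSynth (packingCoeff a ω) ∈ Fka d (2 ^ d - 1) a := by
  simp only [Fka, Set.mem_ofPred_eq, theta_walshSynth]
  refine ⟨by simp [packingCoeff], fun s hs => ?_, ?_⟩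
  · rw [packingCoeff, dif_neg hs]
    split <;> simp
  · have hsupp : {s : Cube d | s ≠ (fun _ => false) ∧ packingCoeff a ω s ≠ 0}
        = {s | s ≠ fun _ => false} := by
      ext s
      simp only [Set.mem_ofPred_eq, and_iff_left_iff_imp]
      intro hs
      rw [packingCoeff, dif_neg hs]
      split <;> simpa
    rw [hsupp, ← Nat.card_coe_set_eq, Nat.card_eq_fintype_card, ← card_nonzero_frequencies]
    rfl

lemma sum_sq_packingCoeff_sub (a : ℝ) (ω ω' : {s : Cube d // s ≠ fun _ => false} → Bool) :
    ∑ s, (packingCoeff a ω s - packingCoeff a ω' s) ^ 2 = 4 * a ^ 2 * hammingDist ω ω' := by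
  have hzero (s : {s : Cube d // ¬s ≠ fun _ => false}) :
      (packingCoeff a ω s - packingCoeff a ω' s) ^ 2 = 0 := by
    simp [packingCoeff, not_not.mp s.2]
  have hsign (i : {s : Cube d // s ≠ fun _ => false}) :
      (packingCoeff a ω i - packingCoeff a ω' i) ^ 2 =
        4 * a ^ 2 * if ω i ≠ ω' i then 1 else 0 := by
    rw [packingCoeff, packingCoeff, dif_neg i.2, dif_neg i.2]
    cases ω i <;> cases ω' i <;> norm_num <;> ring
  rw [← Fintype.sum_subtype_add_sum_subtype (fun s => s ≠ fun _ => false)]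
  simp only [hzero, hsign, sum_const_zero, add_zero, ← mul_sum, sum_boole, hammingDist]

lemma packingCoeff_injective {a : ℝ} (ha : a ≠ 0) :
    Function.Injective (packingCoeff (d := d) a) := by
  intro ω ω' h
  have hdist := sum_sq_packingCoeff_sub a ω ω'
  simpa [h, ha, hammingDist_eq_zero] using hdist

lemma walshSynth_injective : Function.Injective (walshSynth (d := d)) :=
  Function.LeftInverse.injective (g := theta) fun c => funext (theta_walshSynth c)

end Packing

theorem Fka_packing_full_general (d : ℕ)
    (a : ℝ) (ha : 0 < a) :
    ∃ FF : Finset (Cube d → ℝ),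
      ↑FF ⊆ Fka d (2 ^ d - 1) a ∧
      (∀ f ∈ FF, ∀ f' ∈ FF, f ≠ f' →
        ((2 : ℝ) ^ d - 1) * a ^ 2 ≤ ∑ x : Cube d, (f x - f' x) ^ 2) ∧
      ((2 : ℝ) ^ d - 1) / 8 ≤ Real.log (FF.card : ℝ) := by
  obtain ⟨S, hS_dist, hS_log⟩ :=
    exists_hammingDist_packing_log_card {s : Cube d // s ≠ fun _ => false}
  have hM : (Fintype.card {s : Cube d // s ≠ fun _ => false} : ℝ) = 2 ^ d - 1 := by
    rw [card_nonzero_frequencies, Nat.cast_sub Nat.one_le_two_pow]; push_cast; rfl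
  let f (ω : {s : Cube d // s ≠ fun _ => false} → Bool) := walshSynth (packingCoeff a ω)
  have hf : Function.Injective f := walshSynth_injective.comp (packingCoeff_injective ha.ne')
  refine ⟨S.image f, ?_, ?_, ?_⟩
  · rw [coe_image]
    rintro _ ⟨ω, -, rfl⟩
    exact walshSynth_packingCoeff_mem_Fka ha.ne' ω
  · simp only [mem_image]
    rintro _ ⟨ω, hω, rfl⟩ _ ⟨ω', hω', rfl⟩ hne
    have hdist : (Fintype.card {s : Cube d // s ≠ fun _ => false} : ℝ) ≤
        4 * hammingDist ω ω' := by
      exact_mod_cast hS_dist ω hω ω' hω' (ne_of_apply_ne f hne)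
    calc ((2 : ℝ) ^ d - 1) * a ^ 2 ≤ 4 * a ^ 2 * hammingDist ω ω' := by
          rw [← hM]; nlinarith [sq_nonneg a]
      _ = ∑ x, (f ω - f ω') x ^ 2 := by
          rw [walshSynth_sub, sum_sq_walshSynth, ← sum_sq_packingCoeff_sub]; rfl
  · rwa [card_image_of_injective S hf, ← hM]

/-- **Lemma 3, item 3.** Let `M = 2^d` and let `a > 0` satisfy
`(M-1)a ≤ 1/(2√M)` and `a ≤ M^{-1/2} M^{-1/p}` for some `0 < p ≤ 1`. Then there exists a
subset `F̃(M-1,a) ⊆ F(M-1,a)` such that `‖f - f'‖² ≥ (M-1)a²` for all distinct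
`f, f' ∈ F̃(M-1,a)` and `log|F̃(M-1,a)| ≥ (M-1)/8`. -/
theorem Fka_packing_full (d : ℕ) (hd : 1 ≤ d) (p : ℝ) (hp0 : 0 < p) (hp1 : p ≤ 1)
    (a : ℝ) (ha : 0 < a)
    (h1 : ((2 : ℝ) ^ d - 1) * a ≤ 1 / (2 * Real.sqrt (2 ^ d)))
    (h2 : a ≤ (1 / Real.sqrt (2 ^ d)) * ((2 : ℝ) ^ d) ^ (-(1 / p))) :
    ∃ FF : Finset (Cube d → ℝ),
      ↑FF ⊆ Fka d (2 ^ d - 1) a ∧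
      (∀ f ∈ FF, ∀ f' ∈ FF, f ≠ f' →
        ((2 : ℝ) ^ d - 1) * a ^ 2 ≤ ∑ x : Cube d, (f x - f' x) ^ 2) ∧
      ((2 : ℝ) ^ d - 1) / 8 ≤ Real.log (FF.card : ℝ) :=
  Fka_packing_full_general d a ha

end RWT
end
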